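/- (Identity (18) of the paper.) In the setting of identity (17) (same F, H, D, G_j(Γ), λ_i^k(Γ), Φ_s^i), for all i < k: D·λ_i^k(Γ)·G_i(Γ) = C·Σ_{δ=0}^{k-i-1} A^δ Γ L̂_{k-δ} Φ_{k-δ}^i (I_n⊗V̄†) L̂_i + C A^{k-i} Γ L̂_i. In particular the map Γ ↦ D·λ_i^k(Γ)·G_i(Γ) is linear in Γ (it vanishes at Γ = 0). -/

import Mathlib

open Matrix
open scoped Kronecker Matrix

noncomputable section

/-- `V̄ = [I_{m-1}  -1_{m-1}] ∈ ℝ^{(m-1)×m}`. -/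
def Vbar (m : ℕ) : Matrix (Fin (m-1)) (Fin m) ℝ :=
  Matrix.of fun i j => if (j : ℕ) = m - 1 then -1 else if (j : ℕ) = (i : ℕ) then 1 else 0

/-- The Moore–Penrose inverse `V̄† = V̄ᵀ(V̄V̄ᵀ)⁻¹`. -/
def Vdag (m : ℕ) : Matrix (Fin m) (Fin (m-1)) ℝ :=
  (Vbar m)ᵀ * (Vbar m * (Vbar m)ᵀ)⁻¹

/-- The all-ones column vector `1_k`, as a `k × 1` matrix. -/
def onesCol (k : ℕ) : Matrix (Fin k) (Fin 1) ℝ := Matrix.of fun _ _ => 1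

/-- `I_n ⊗ 1_m`, as an `(nm) × n` matrix. -/
def onesK (n m : ℕ) : Matrix (Fin n × Fin m) (Fin n) ℝ :=
  Matrix.of fun p j => if p.1 = j then 1 else 0

/-- `C = (1,0,…,0) ∈ ℝ^{1×n}`. -/
def Cmat (n : ℕ) : Matrix (Fin 1) (Fin n) ℝ :=
  Matrix.of fun _ j => if (j : ℕ) = 0 then 1 else 0

/-- `F = A ⊗ I_m`. -/
def Fmat (n m : ℕ) (A : Matrix (Fin n) (Fin n) ℝ) :
    Matrix (Fin n × Fin m) (Fin n × Fin m) ℝ :=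
  A ⊗ₖ (1 : Matrix (Fin m) (Fin m) ℝ)

/-- `H = C ⊗ V̄`. -/
def Hmat (n m : ℕ) : Matrix (Fin 1 × Fin (m-1)) (Fin n × Fin m) ℝ :=
  Cmat n ⊗ₖ Vbar m

/-- `F_oo = A ⊗ I_{m-1}`. -/
def Foo (n m : ℕ) (A : Matrix (Fin n) (Fin n) ℝ) :
    Matrix (Fin n × Fin (m-1)) (Fin n × Fin (m-1)) ℝ :=
  A ⊗ₖ (1 : Matrix (Fin (m-1)) (Fin (m-1)) ℝ)

/-- `H_o = C ⊗ I_{m-1}`. -/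
def Ho (n m : ℕ) : Matrix (Fin 1 × Fin (m-1)) (Fin n × Fin (m-1)) ℝ :=
  Cmat n ⊗ₖ (1 : Matrix (Fin (m-1)) (Fin (m-1)) ℝ)

/-- `D = (1/m)·C(I_n ⊗ 1_mᵀ)`. -/
def Dmat (n m : ℕ) : Matrix (Fin 1) (Fin n × Fin m) ℝ :=
  (m : ℝ)⁻¹ • (Cmat n * (onesK n m)ᵀ)

/-- `I_n ⊗ V̄†`. -/
def VdagK (n m : ℕ) : Matrix (Fin n × Fin m) (Fin n × Fin (m-1)) ℝ :=
  (1 : Matrix (Fin n) (Fin n) ℝ) ⊗ₖ Vdag m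

/-- `I_n ⊗ V̄`. -/
def VbarK (n m : ℕ) : Matrix (Fin n × Fin (m-1)) (Fin n × Fin m) ℝ :=
  (1 : Matrix (Fin n) (Fin n) ℝ) ⊗ₖ Vbar m

/-- `T(Γ) = [(I_n⊗V̄†) + (I_n⊗1_m)Γ , I_n⊗1_m]`. -/
def Tmat (n m : ℕ) (Γ : Matrix (Fin n) (Fin n × Fin (m-1)) ℝ) :
    Matrix (Fin n × Fin m) ((Fin n × Fin (m-1)) ⊕ Fin n) ℝ :=
  Matrix.fromCols (VdagK n m + onesK n m * Γ) (onesK n m)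

/-- The claimed inverse of `T(Γ)`: top block-row `I_n⊗V̄`,
bottom block-row `-Γ(I_n⊗V̄) + (1/m)(I_n⊗1_mᵀ)`. -/
def Tinv (n m : ℕ) (Γ : Matrix (Fin n) (Fin n × Fin (m-1)) ℝ) :
    Matrix ((Fin n × Fin (m-1)) ⊕ Fin n) (Fin n × Fin m) ℝ :=
  Matrix.fromRows (VbarK n m) (-(Γ * VbarK n m) + (m : ℝ)⁻¹ • (onesK n m)ᵀ)

/-- `G_j(Γ) = ((I_n⊗V̄†) + (I_n⊗1_m)Γ)·L̂_j`. -/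
def Gmat (n m : ℕ) (Γ : Matrix (Fin n) (Fin n × Fin (m-1)) ℝ)
    (Lhat : ℕ → Matrix (Fin n × Fin (m-1)) (Fin 1 × Fin (m-1)) ℝ) (j : ℕ) :
    Matrix (Fin n × Fin m) (Fin 1 × Fin (m-1)) ℝ :=
  (VdagK n m + onesK n m * Γ) * Lhat j

/-- `λ_i^k(Γ) = (F + G_k(Γ)H)·(F + G_{k-1}(Γ)H)⋯(F + G_{i+1}(Γ)H)`, with
`λ_i^k(Γ) = I` for `k ≤ i`. -/
def lam (n m : ℕ) (A : Matrix (Fin n) (Fin n) ℝ)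
    (Γ : Matrix (Fin n) (Fin n × Fin (m-1)) ℝ)
    (Lhat : ℕ → Matrix (Fin n × Fin (m-1)) (Fin 1 × Fin (m-1)) ℝ) (i : ℕ) :
    ℕ → Matrix (Fin n × Fin m) (Fin n × Fin m) ℝ
  | 0 => 1
  | k + 1 => if k + 1 ≤ i then 1
      else (Fmat n m A + Gmat n m Γ Lhat (k+1) * Hmat n m) * lam n m A Γ Lhat i k

variable (n m : ℕ) (hm : 2 ≤ m) (A : Matrix (Fin n) (Fin n) ℝ)

lemma vbar_row_sum (t : Fin (m-1)) : ∑ j : Fin m, Vbar m t j = 0 := by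
  have hm1 : m - 1 < m := by have := t.isLt; omega
  have ht : (t : ℕ) < m := by have := t.isLt; omega
  have key : ∀ j : Fin m, Vbar m t j =
      (if j = ⟨m-1, hm1⟩ then (-1:ℝ) else 0) + (if j = ⟨t, ht⟩ then 1 else 0) := by
    intro j
    have htne : (t:ℕ) ≠ m - 1 := by have := t.isLt; omega
    simp only [Vbar, of_apply, Fin.ext_iff]
    split_ifs <;> simp_all
  rw [Finset.sum_congr rfl fun j _ => key j, Finset.sum_add_distrib,
    Finset.sum_ite_eq' _ _ (fun _ => (-1:ℝ)), Finset.sum_ite_eq' _ _ (fun _ => (1:ℝ))]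
  simp

lemma vdag_col_sum (q : Fin (m-1)) : ∑ s : Fin m, Vdag m s q = 0 := by
  simp only [Vdag, Matrix.mul_apply, transpose_apply]
  rw [Finset.sum_comm]
  refine Finset.sum_eq_zero fun t _ => ?_
  rw [← Finset.sum_mul, vbar_row_sum, zero_mul]

lemma M1 : (onesK n m)ᵀ * Fmat n m A = A * (onesK n m)ᵀ := by
  ext j ⟨p, q⟩
  simp [Matrix.mul_apply, Fintype.sum_prod_type, onesK, Fmat, Matrix.one_apply,
    transpose_apply, ite_and, Finset.sum_ite_eq, Finset.sum_ite_eq', mul_comm]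

lemma M2 : (onesK n m)ᵀ * VdagK n m = 0 := by
  ext j ⟨p, q⟩
  simp only [Matrix.mul_apply, Fintype.sum_prod_type, onesK, VdagK, transpose_apply,
    of_apply, kroneckerMap_apply, Matrix.zero_apply, Matrix.one_apply]
  rw [Finset.sum_eq_single j]
  · simp [← Finset.mul_sum, vdag_col_sum]
  · intro b _ hb; simp [hb]
  · simp
lemma M3 : (onesK n m)ᵀ * onesK n m = (m : ℝ) • 1 := by
  ext j j'
  simp [Matrix.mul_apply, Fintype.sum_prod_type, onesK, Matrix.one_apply, ite_and,
    Finset.sum_ite_eq, eq_comm]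
  split_ifs <;> simp
lemma M4 : VbarK n m * onesK n m = 0 := by
  ext ⟨p, q⟩ j
  simp only [Matrix.mul_apply, Fintype.sum_prod_type, onesK, VbarK, of_apply,
    kroneckerMap_apply, Matrix.zero_apply, Matrix.one_apply]
  rw [Finset.sum_eq_single j]
  · simp [mul_ite, ← Finset.sum_mul, vbar_row_sum]
  · intro b _ hb; simp [hb, Ne.symm hb]
  · simp
lemma M5 : VbarK n m * Fmat n m A = Foo n m A * VbarK n m := by
  unfold VbarK Fmat Foo
  rw [← Matrix.mul_kronecker_mul, ← Matrix.mul_kronecker_mul]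
  simp
lemma M6 : Ho n m * VbarK n m = Hmat n m := by
  unfold Ho VbarK Hmat
  rw [← Matrix.mul_kronecker_mul]
  simp

/-- `E = (1/m)(I_n ⊗ 1_mᵀ)`. -/
def Emat (n m : ℕ) : Matrix (Fin n) (Fin n × Fin m) ℝ := (m : ℝ)⁻¹ • (onesK n m)ᵀ

variable (Γ : Matrix (Fin n) (Fin n × Fin (m-1)) ℝ)
    (Lhat : ℕ → Matrix (Fin n × Fin (m-1)) (Fin 1 × Fin (m-1)) ℝ)

lemma E1 : Emat n m * Fmat n m A = A * Emat n m := by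
  simp [Emat, Matrix.smul_mul, Matrix.mul_smul, M1]
lemma E2 : Emat n m * VdagK n m = 0 := by simp [Emat, Matrix.smul_mul, M2]
lemma E3 (hm : 2 ≤ m) : Emat n m * onesK n m = 1 := by
  have : (m : ℝ) ≠ 0 := by positivity
  simp [Emat, Matrix.smul_mul, M3, smul_smul, inv_mul_cancel₀ this]
lemma E4 (hm : 2 ≤ m) (j : ℕ) : Emat n m * Gmat n m Γ Lhat j = Γ * Lhat j := by
  rw [Gmat, ← Matrix.mul_assoc, Matrix.mul_add, E2, ← Matrix.mul_assoc, E3 n m hm]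
  simp
lemma E5 : Dmat n m = Cmat n * Emat n m := by
  simp [Dmat, Emat, Matrix.mul_smul, mul_assoc]

lemma W4 (j : ℕ) : VbarK n m * Gmat n m Γ Lhat j = VbarK n m * (VdagK n m * Lhat j) := by
  rw [Gmat, ← Matrix.mul_assoc, Matrix.mul_add, ← Matrix.mul_assoc, M4, Matrix.zero_mul,
    add_zero, Matrix.mul_assoc]

lemma lam_self (i : ℕ) : lam n m A Γ Lhat i i = 1 := by
  cases i with
  | zero => rfl
  | succ k => simp [lam]
lemma lam_succ {i k : ℕ} (h : i ≤ k) :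
    lam n m A Γ Lhat i (k+1)
      = (Fmat n m A + Gmat n m Γ Lhat (k+1) * Hmat n m) * lam n m A Γ Lhat i k := by
  rw [lam, if_neg (by omega)]

lemma wlam (i : ℕ) : ∀ k, ∃ N : Matrix (Fin n × Fin (m-1)) (Fin n × Fin (m-1)) ℝ, ∀ Γ,
    VbarK n m * lam n m A Γ Lhat i k = N * VbarK n m := by
  intro k
  induction k with
  | zero => exact ⟨1, fun Γ => by simp [lam]⟩
  | succ k ih =>
    obtain ⟨N, hN⟩ := ih
    by_cases h : k + 1 ≤ i
    · exact ⟨1, fun Γ => by simp [lam, h]⟩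
    · refine ⟨(Foo n m A + VbarK n m * (VdagK n m * Lhat (k+1)) * Ho n m) * N, fun Γ => ?_⟩
      rw [lam_succ n m A Γ Lhat (by omega), ← Matrix.mul_assoc, Matrix.mul_add, M5,
        ← Matrix.mul_assoc, W4, ← M6 n m]
      rw [show VbarK n m * (VdagK n m * Lhat (k+1)) * (Ho n m * VbarK n m)
            = (VbarK n m * (VdagK n m * Lhat (k+1)) * Ho n m) * VbarK n m by
          simp [Matrix.mul_assoc]]
      rw [← Matrix.add_mul, Matrix.mul_assoc, Matrix.mul_assoc, hN Γ,
        ← Matrix.mul_assoc, ← Matrix.mul_assoc]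

lemma hlam_indep (i k : ℕ) : Hmat n m * lam n m A Γ Lhat i k
    = Hmat n m * lam n m A 0 Lhat i k := by
  obtain ⟨N, hN⟩ := wlam n m A Lhat i k
  rw [← M6, Matrix.mul_assoc, Matrix.mul_assoc, hN Γ, hN 0]

lemma hlam_G (i k : ℕ) (Γ' : Matrix (Fin n) (Fin n × Fin (m-1)) ℝ) :
    Hmat n m * lam n m A Γ' Lhat i k * Gmat n m Γ Lhat i
    = Hmat n m * lam n m A 0 Lhat i k * (VdagK n m * Lhat i) := by
  obtain ⟨N, hN⟩ := wlam n m A Lhat i k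
  calc Hmat n m * lam n m A Γ' Lhat i k * Gmat n m Γ Lhat i
      = Ho n m * (VbarK n m * lam n m A Γ' Lhat i k) * Gmat n m Γ Lhat i := by
        rw [← M6]; simp [Matrix.mul_assoc]
    _ = Ho n m * (N * VbarK n m) * Gmat n m Γ Lhat i := by rw [hN Γ']
    _ = Ho n m * N * (VbarK n m * Gmat n m Γ Lhat i) := by
        simp [Matrix.mul_assoc]
    _ = Ho n m * N * (VbarK n m * (VdagK n m * Lhat i)) := by rw [W4]
    _ = Ho n m * (N * VbarK n m) * (VdagK n m * Lhat i) := by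
        simp [Matrix.mul_assoc]
    _ = Ho n m * (VbarK n m * lam n m A 0 Lhat i k) * (VdagK n m * Lhat i) := by rw [hN 0]
    _ = Hmat n m * lam n m A 0 Lhat i k * (VdagK n m * Lhat i) := by
        rw [← M6]; simp [Matrix.mul_assoc]

lemma elam (hm : 2 ≤ m) (i k : ℕ) (hik : i < k) :
    Emat n m * lam n m A Γ Lhat i k =
      (∑ δ ∈ Finset.range (k - i),
        A ^ δ * Γ * Lhat (k - δ) * (Hmat n m * lam n m A 0 Lhat i (k - δ - 1)))
      + A ^ (k - i) * Emat n m := by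
  induction k, hik using Nat.le_induction with
  | base =>
    have h1 : i + 1 - i = 1 := by omega
    have h2 : i + 1 - 0 - 1 = i := by omega
    rw [lam_succ n m A Γ Lhat (le_refl i), lam_self, Matrix.mul_one, Matrix.mul_add, E1,
      ← Matrix.mul_assoc, E4 n m Γ Lhat hm, h1, Finset.sum_range_one, h2, lam_self,
      Matrix.mul_one, pow_zero, pow_one, Nat.sub_zero]
    rw [Matrix.one_mul, add_comm]
  | succ k hk ih =>
    have h2 : k + 1 - i = (k - i) + 1 := by omega
    rw [lam_succ n m A Γ Lhat (by omega), ← Matrix.mul_assoc, Matrix.mul_add, E1,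
      ← Matrix.mul_assoc, E4 n m Γ Lhat hm, Matrix.add_mul, Matrix.mul_assoc,
      Matrix.mul_assoc, ih, hlam_indep, h2, Finset.sum_range_succ']
    simp only [Nat.succ_sub_succ_eq_sub, Nat.sub_zero, Nat.add_sub_cancel, pow_zero,
      Matrix.one_mul, Matrix.mul_add, Matrix.mul_sum, pow_succ', Matrix.mul_assoc]
    abel

theorem stmt_16' (hn : 1 ≤ n) (hm : 2 ≤ m) (i k : ℕ) (hik : i < k) :
    Dmat n m * lam n m A Γ Lhat i k * Gmat n m Γ Lhat i =
      Cmat n *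
        (∑ δ ∈ Finset.range (k - i),
          A ^ δ * Γ * Lhat (k - δ) * (Hmat n m * lam n m A 0 Lhat i (k - δ - 1)) *
            (VdagK n m * Lhat i)) +
      Cmat n * A ^ (k - i) * Γ * Lhat i := by
  rw [E5, Matrix.mul_assoc (Cmat n), elam n m A Γ Lhat hm i k hik, Matrix.mul_assoc,
    Matrix.add_mul, Matrix.sum_mul]
  have hterm : ∀ δ ∈ Finset.range (k - i),
      A ^ δ * Γ * Lhat (k - δ) * (Hmat n m * lam n m A 0 Lhat i (k - δ - 1)) *
        Gmat n m Γ Lhat i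
      = A ^ δ * Γ * Lhat (k - δ) * (Hmat n m * lam n m A 0 Lhat i (k - δ - 1)) *
        (VdagK n m * Lhat i) := by
    intro δ _
    rw [Matrix.mul_assoc (A ^ δ * Γ * Lhat (k - δ)), Matrix.mul_assoc (A ^ δ * Γ * Lhat (k - δ)),
      hlam_G n m A Γ Lhat i (k - δ - 1) 0]
  rw [Finset.sum_congr rfl hterm, Matrix.mul_assoc (A ^ (k-i)), E4 n m Γ Lhat hm,
    Matrix.mul_add]
  simp [Matrix.mul_assoc]

/-- **identity (18).** For `i < k`,
`D·λ_i^k(Γ)·G_i(Γ) = C·Σ_{δ=0}^{k-i-1} A^δ Γ L̂_{k-δ} Φ_{k-δ}^i (I_n⊗V̄†)L̂_i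
+ C A^{k-i} Γ L̂_i`, where `Φ_s^i = H·λ_i^{s-1}(0)`. In particular
`Γ ↦ D·λ_i^k(Γ)·G_i(Γ)` is linear in `Γ` (it vanishes at `Γ = 0`). -/
theorem stmt_16 (n m : ℕ) (hn : 1 ≤ n) (hm : 2 ≤ m)
    (A : Matrix (Fin n) (Fin n) ℝ)
    (Γ : Matrix (Fin n) (Fin n × Fin (m-1)) ℝ)
    (Lhat : ℕ → Matrix (Fin n × Fin (m-1)) (Fin 1 × Fin (m-1)) ℝ)
    (i k : ℕ) (hik : i < k) :
    Dmat n m * lam n m A Γ Lhat i k * Gmat n m Γ Lhat i =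
      Cmat n *
        (∑ δ ∈ Finset.range (k - i),
          A ^ δ * Γ * Lhat (k - δ) * (Hmat n m * lam n m A 0 Lhat i (k - δ - 1)) *
            (VdagK n m * Lhat i)) +
      Cmat n * A ^ (k - i) * Γ * Lhat i :=
  stmt_16' n m A Γ Lhat hn hm i k hik
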